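/- arXiv:2006.09139 — 8 statements merged into one kernel-verified Lean document; each statement's English description precedes it below -/
import Mathlib

section
/- Let G be a finite group and H a subgroup of G. If H is s-permutable in G, then H is subnormal in G. -/
open Pointwise

/-- A subgroup `H` of `G` is s-permutable (s-quasinormal) in `G` if `H` permutes with
every Sylow subgroup of `G`. -/
def IsSPermutable {G : Type*} [Group G] (H : Subgroup G) : Prop :=
  ∀ q : ℕ, q.Prime → ∀ Q : Sylow q G,
    (H : Set G) * ((Q : Subgroup G) : Set G) = ((Q : Subgroup G) : Set G) * (H : Set G)

/-- `H` is subnormal in `G`: there is a chain `H = H_0 ⊴ H_1 ⊴ ... ⊴ H_n = G`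
with each term normal in the next. -/
def IsSubnormal {G : Type*} [Group G] (H : Subgroup G) : Prop :=
  ∃ (n : ℕ) (c : Fin (n + 1) → Subgroup G),
    c 0 = H ∧ c (Fin.last n) = ⊤ ∧
    ∀ i : Fin n, c i.castSucc ≤ c i.succ ∧
      ((c i.castSucc).subgroupOf (c i.succ)).Normal

/-!
Induction on `|G|`. If `H ⊔ N < G` for some nontrivial normal `N`, then `H` is subnormal in
`H ⊔ N` and `(H ⊔ N)/N` is subnormal in `G/N`. Otherwise `H` is core-free and `H ⊔ N = G` for
every nontrivial normal `N`, and then either `G` is a `p`-group (hence nilpotent) or `H = 1`.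

If `HQ = G` for a Sylow `q`-subgroup `Q`, then `|G : H|` is a power of `q`; for a Sylow
`r`-subgroup `R` with `r ≠ q`, `|HR : H|` is a power of `r` dividing `|G : H|`, so `R ≤ H`, and
core-freeness leaves `G` a `q`-group.

Otherwise, by induction `H` is subnormal in every `HQ`. Each factor of a subnormal series from
`H` to `HQ` is covered by the image of `Q`, so every `q'`-element of `HQ` lies in `H`. The
`q'`-elements of `H` are then normalized by `H` and by every Sylow `q`-subgroup, hence by `G`,
so they are trivial. An element of `H` of prime order `t` thus forces `t` to be the only prime
dividing `|G|`.
-/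

section

variable {G : Type*} [Group G]

theorem orderOf_conj (g x : G) : orderOf (g * x * g⁻¹) = orderOf x :=
  (SemiconjBy.orderOf_eq g (by simp [SemiconjBy, mul_assoc])).symm

theorem IsPGroup.of_forall_prime_dvd_card [Finite G] {p : ℕ} (hp : p.Prime)
    (h : ∀ r, r.Prime → r ∣ Nat.card G → r = p) : IsPGroup p G := by
  rw [isPGroup_iff_primeFactors_card_subset hp.ne_zero, hp.primeFactors]
  intro r hr
  rw [Finset.mem_singleton]
  exact h r (Nat.prime_of_mem_primeFactors hr) (Nat.dvd_of_mem_primeFactors hr)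

theorem IsPGroup.exists_index_eq_pow_of_mul_eq_univ [Finite G] {p : ℕ} [Fact p.Prime]
    {H K : Subgroup G} (hK : IsPGroup p K) (h : (K : Set G) * (H : Set G) = Set.univ) :
    ∃ n, H.index = p ^ n := by
  obtain ⟨n, hn⟩ := hK.card_orbit (α := G ⧸ H) (1 : G)
  refine ⟨n, ?_⟩
  have horbit : MulAction.orbit K ((1 : G) : G ⧸ H) = Set.univ := by
    refine Set.eq_univ_of_forall fun y => QuotientGroup.induction_on y fun g => ?_
    obtain ⟨k, hk, h', hh', rfl⟩ : g ∈ (K : Set G) * H := h ▸ Set.mem_univ g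
    exact ⟨⟨k, hk⟩, (QuotientGroup.eq.mpr (by simpa using hh')).symm⟩
  rw [Subgroup.index, ← hn, horbit, Nat.card_univ]

theorem Sylow.le_normalCore {p : ℕ} {M : Subgroup G}
    (h : ∀ P : Sylow p G, (P : Subgroup G) ≤ M) (P : Sylow p G) :
    (P : Subgroup G) ≤ M.normalCore := fun x hx b =>
  h (b • P) (by
    rw [Sylow.coe_subgroup_smul]
    exact Subgroup.smul_mem_pointwise_smul x (MulAut.conj b) _ hx)

theorem NormalizerCondition.isSubnormal [Finite G] (hnc : NormalizerCondition G)
    (H : Subgroup G) : H.IsSubnormal := by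
  induction H using WellFoundedGT.induction with
  | _ H ih =>
    rcases eq_or_ne H ⊤ with rfl | hH
    · exact .top
    · exact .step H _ Subgroup.le_normalizer (ih _ (hnc H hH.lt_top))
        Subgroup.normal_in_normalizer

end

namespace Subgroup

variable {G : Type*} [Group G]

theorem card_lt_of_ne_top [Finite G] {K : Subgroup G} (hK : K ≠ ⊤) : Nat.card K < Nat.card G :=
  K.card_le_card_group.lt_of_ne (mt K.card_eq_iff_eq_top.mp hK)

theorem card_quotient_lt [Finite G] {N : Subgroup G} [N.Normal] (hN : N ≠ ⊥) :
    Nat.card (G ⧸ N) < Nat.card G := by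
  rw [N.card_eq_card_quotient_mul_card_subgroup]
  exact lt_mul_of_one_lt_right Nat.card_pos ((N.one_lt_card_iff_ne_bot).mpr hN)

theorem coe_sup_of_mul_comm {H K : Subgroup G} (h : (H : Set G) * K = K * H) :
    ((H ⊔ K : Subgroup G) : Set G) = H * K := by
  let L : Subgroup G :=
    { carrier := H * K
      one_mem' := ⟨1, H.one_mem, 1, K.one_mem, mul_one 1⟩
      mul_mem' := by
        rintro _ _ ⟨h₁, hh₁, k₁, hk₁, rfl⟩ ⟨h₂, hh₂, k₂, hk₂, rfl⟩
        obtain ⟨h₃, hh₃, k₃, hk₃, e⟩ : k₁ * h₂ ∈ (H : Set G) * K := h ▸ ⟨k₁, hk₁, h₂, hh₂, rfl⟩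
        exact ⟨h₁ * h₃, H.mul_mem hh₁ hh₃, k₃ * k₂, K.mul_mem hk₃ hk₂, by
          simp only [mul_assoc, ← mul_assoc h₃, e]⟩
      inv_mem' := by
        rintro _ ⟨h₁, hh₁, k₁, hk₁, rfl⟩
        rw [mul_inv_rev]
        exact h ▸ ⟨k₁⁻¹, K.inv_mem hk₁, h₁⁻¹, H.inv_mem hh₁, rfl⟩ }
  have hL : H ⊔ K ≤ L :=
    sup_le (fun x hx => ⟨x, hx, 1, K.one_mem, mul_one x⟩)
      fun x hx => ⟨1, H.one_mem, x, hx, one_mul x⟩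
  exact subset_antisymm hL (mul_subset (SetLike.coe_subset_coe.mpr le_sup_left)
    (SetLike.coe_subset_coe.mpr le_sup_right))

theorem mul_subgroupOf_eq_univ {H K T : Subgroup G} (hT : (T : Set G) = H * K) :
    (H.subgroupOf T : Set T) * (K.subgroupOf T : Set T) = Set.univ := by
  have hHT : H ≤ T := fun x hx => hT.symm.subset ⟨x, hx, 1, K.one_mem, mul_one x⟩
  have hKT : K ≤ T := fun x hx => hT.symm.subset ⟨1, H.one_mem, x, hx, one_mul x⟩
  refine Set.eq_univ_of_forall fun t => ?_
  obtain ⟨h, hh, k, hk, e⟩ : (t : G) ∈ (H : Set G) * K := hT ▸ t.2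
  exact ⟨⟨h, hHT hh⟩, hh, ⟨k, hKT hk⟩, hk, Subtype.ext e⟩

theorem le_normalizer_setOf_orderOf (L : Subgroup G) (P : ℕ → Prop) :
    L ≤ normalizer {x | x ∈ L ∧ P (orderOf x)} := fun _ hg n =>
  and_congr (le_normalizer hg n) (by rw [orderOf_conj])

theorem eq_one_of_coprime_of_mem_sup_sylow [Finite G] {H : Subgroup G}
    (hjoin : ∀ N : Subgroup G, N.Normal → N ≠ ⊥ → H ⊔ N = ⊤) (hcore : H.normalCore = ⊥)
    {q : ℕ} [Fact q.Prime] (hqG : q ∣ Nat.card G)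
    (hmem : ∀ Q : Sylow q G, ∀ x ∈ H ⊔ Q, (orderOf x).Coprime q → x ∈ H)
    {x : G} (hxH : x ∈ H) (hx : (orderOf x).Coprime q) : x = 1 := by
  set S := {y | y ∈ H ∧ (orderOf y).Coprime q}
  have hS (Q : Sylow q G) : H ⊔ Q ≤ normalizer S := by
    have : S = {y | y ∈ H ⊔ Q ∧ (orderOf y).Coprime q} := Set.ext fun y =>
      ⟨fun h => ⟨le_sup_left (b := (Q : Subgroup G)) h.1, h.2⟩, fun h => ⟨hmem Q y h.1 h.2, h.2⟩⟩
    rw [this]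
    exact (H ⊔ Q).le_normalizer_setOf_orderOf (·.Coprime q)
  have hN : (normalizer S).normalCore ≠ ⊥ := fun h =>
    Sylow.ne_bot_of_dvd_card default hqG
      (le_bot_iff.mp (h ▸ Sylow.le_normalCore (fun Q => le_sup_right.trans (hS Q)) default))
  have hM : normalizer S = ⊤ := top_le_iff.mp <|
    hjoin _ inferInstance hN ▸ sup_le (le_sup_left.trans (hS default)) (normalCore_le _)
  have hxcore : x ∈ H.normalCore := fun b =>
    (((hM ▸ mem_top b : b ∈ normalizer S) x).mp ⟨hxH, hx⟩).1
  rwa [hcore, mem_bot] at hxcore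

namespace IsSubnormal

theorem of_sup_normal {H N : Subgroup G} [N.Normal] (hH : (H.subgroupOf (H ⊔ N)).IsSubnormal)
    (hHN : ((H ⊔ N).map (QuotientGroup.mk' N)).IsSubnormal) : H.IsSubnormal := by
  have h := hHN.comap (QuotientGroup.mk' N)
  rw [comap_map_eq, QuotientGroup.ker_mk', sup_assoc, sup_idem] at h
  exact hH.trans le_sup_left h

theorem mem_of_coprime {q : ℕ} {H Q : Subgroup G} (hH : H.IsSubnormal) (hQ : IsPGroup q Q)
    (hHQ : (H : Set G) * (Q : Set G) = Set.univ) {x : G} (hx : (orderOf x).Coprime q) : x ∈ H := by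
  induction hH with
  | top => trivial
  | step H K hHK _ hN ih =>
    have hxK : x ∈ K := ih (Set.eq_univ_of_univ_subset (hHQ ▸ Set.mul_subset_mul_right hHK))
    obtain ⟨h, hh, u, hu, rfl⟩ := Set.mem_mul.mp (hHQ ▸ Set.mem_univ x)
    have huK : u ∈ K := by simpa using K.mul_mem (K.inv_mem (hHK hh)) hxK
    obtain ⟨k, hk⟩ := hQ ⟨u, hu⟩
    let π := QuotientGroup.mk' (H.subgroupOf K)
    have hπ : π ⟨h * u, hxK⟩ = π ⟨u, huK⟩ := by
      rw [show (⟨h * u, hxK⟩ : K) = ⟨h, hHK hh⟩ * ⟨u, huK⟩ from rfl, map_mul,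
        QuotientGroup.mk'_apply, (QuotientGroup.eq_one_iff (N := H.subgroupOf K) _).mpr hh,
        one_mul]
    have hdvd : orderOf (π ⟨h * u, hxK⟩) ∣ orderOf (h * u) :=
      (orderOf_map_dvd π _).trans (orderOf_mk _ _).dvd
    have hpow : π ⟨h * u, hxK⟩ ^ q ^ k = 1 := by
      rw [hπ, ← map_pow, show (⟨u, huK⟩ : K) ^ q ^ k = 1 from
        Subtype.ext (by simpa using congrArg Subtype.val hk), map_one]
    have hone : π ⟨h * u, hxK⟩ = 1 := orderOf_eq_one_iff.mp
      (((hx.pow_right k).coprime_dvd_left hdvd).eq_one_of_dvd (orderOf_dvd_of_pow_eq_one hpow))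
    rwa [QuotientGroup.mk'_apply, QuotientGroup.eq_one_iff, mem_subgroupOf] at hone

theorem mem_of_coprime_of_mem_sup {q : ℕ} {H Q : Subgroup G}
    (hHQ : (H : Set G) * (Q : Set G) = Q * H) (hQ : IsPGroup q Q)
    (hH : (H.subgroupOf (H ⊔ Q)).IsSubnormal) {x : G} (hxHQ : x ∈ H ⊔ Q)
    (hx : (orderOf x).Coprime q) : x ∈ H :=
  hH.mem_of_coprime (x := ⟨x, hxHQ⟩) hQ.comap_subtype
    (mul_subgroupOf_eq_univ (coe_sup_of_mul_comm hHQ)) (by rwa [orderOf_mk])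

theorem isSubnormal {H : Subgroup G} (h : H.IsSubnormal) : _root_.IsSubnormal H := by
  obtain ⟨n, f, hmono, hnormal, h0, hn⟩ := h.exists_chain
  exact ⟨n, fun i => f i, h0, hn, fun i => ⟨hmono (Nat.le_succ i), hnormal i⟩⟩

end IsSubnormal

end Subgroup

namespace IsSPermutable

variable {G : Type*} [Group G] {H : Subgroup G}

theorem subgroupOf (hH : IsSPermutable H) {K : Subgroup G} (hHK : H ≤ K) :
    IsSPermutable (H.subgroupOf K) := by
  intro q hq Q
  obtain ⟨P, hP⟩ := Sylow.exists_comap_subtype_eq Q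
  apply Set.image_injective.mpr K.subtype_injective
  rw [Set.image_mul, Set.image_mul, ← hP, ← Subgroup.coe_map, ← Subgroup.coe_map,
    Subgroup.subgroupOf_map_subtype, inf_eq_left.mpr hHK, Subgroup.map_comap_eq,
    Subgroup.range_subtype, Subgroup.inf_mul_assoc K P H hHK, inf_comm,
    Subgroup.mul_inf_assoc H P K hHK, hH q hq P, Set.inter_comm]

theorem map [Finite G] {G' : Type*} [Group G'] {f : G →* G'} (hf : Function.Surjective f)
    (hH : IsSPermutable H) : IsSPermutable (H.map f) := by
  intro q hq Q
  have := Fact.mk hq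
  obtain ⟨Q, rfl⟩ := Sylow.mapSurjective_surjective hf q Q
  simp only [Sylow.coe_mapSurjective, Subgroup.coe_map, ← Set.image_mul, hH q hq Q]

theorem sup_normal (hH : IsSPermutable H) (N : Subgroup G) [N.Normal] :
    IsSPermutable (H ⊔ N) := by
  intro q hq Q
  rw [Subgroup.mul_normal H N, mul_assoc, ← Subgroup.set_mul_normal_comm _ N, ← mul_assoc,
    hH q hq Q, mul_assoc]

theorem isPGroup_of_sup_sylow_eq_top [Finite G] (hH : IsSPermutable H)
    (hcore : H.normalCore = ⊥) {q : ℕ} [Fact q.Prime] (Q : Sylow q G) (hQ : H ⊔ Q = ⊤) :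
    IsPGroup q G := by
  have hQH : ((Q : Subgroup G) : Set G) * (H : Set G) = Set.univ := by
    rw [← hH q Fact.out Q, ← Subgroup.coe_sup_of_mul_comm (hH q Fact.out Q), hQ, Subgroup.coe_top]
  obtain ⟨a, ha⟩ := Q.2.exists_index_eq_pow_of_mul_eq_univ hQH
  refine IsPGroup.of_forall_prime_dvd_card Fact.out fun r hr hrG => by_contra fun hrq => ?_
  have := Fact.mk hr
  have hsylow (R : Sylow r G) : (R : Subgroup G) ≤ H := by
    have hRH := (hH r hr R).symm
    have hT : ((H ⊔ R : Subgroup G) : Set G) = ((R : Subgroup G) : Set G) * (H : Set G) := by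
      rw [Subgroup.coe_sup_of_mul_comm hRH.symm, hRH]
    obtain ⟨b, hb⟩ := R.2.comap_subtype.exists_index_eq_pow_of_mul_eq_univ
      (Subgroup.mul_subgroupOf_eq_univ hT)
    have hdvd : H.relIndex (H ⊔ R) ∣ q ^ a := ha ▸ Subgroup.relIndex_dvd_index_of_le le_sup_left
    have hone : H.relIndex (H ⊔ R) = 1 := Nat.Coprime.eq_one_of_dvd
      (by rw [Subgroup.relIndex, hb]; exact Nat.coprime_pow_primes b a hr Fact.out hrq) hdvd
    exact le_sup_right.trans (Subgroup.relIndex_eq_one.mp hone)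
  exact Sylow.ne_bot_of_dvd_card default hrG
    (le_bot_iff.mp (hcore ▸ Sylow.le_normalCore hsylow default))

theorem exists_isPGroup_or_eq_bot [Finite G] (hH : IsSPermutable H)
    (hsub : ∀ K : Subgroup G, H ≤ K → K ≠ ⊤ → (H.subgroupOf K).IsSubnormal)
    (hjoin : ∀ N : Subgroup G, N.Normal → N ≠ ⊥ → H ⊔ N = ⊤) (hcore : H.normalCore = ⊥) :
    (∃ p, p.Prime ∧ IsPGroup p G) ∨ H = ⊥ := by
  by_cases hfull : ∃ q, q.Prime ∧ ∃ Q : Sylow q G, H ⊔ Q = ⊤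
  · obtain ⟨q, hq, Q, hQ⟩ := hfull
    have := Fact.mk hq
    exact .inl ⟨q, hq, hH.isPGroup_of_sup_sylow_eq_top hcore Q hQ⟩
  push Not at hfull
  refine or_iff_not_imp_right.mpr fun hbot => ?_
  obtain ⟨t, ht, htH⟩ := Nat.exists_prime_and_dvd ((H.one_lt_card_iff_ne_bot).mpr hbot).ne'
  have := Fact.mk ht
  obtain ⟨⟨x, hxH⟩, hxt⟩ := exists_prime_orderOf_dvd_card' t htH
  rw [Subgroup.orderOf_mk] at hxt
  refine ⟨t, ht, IsPGroup.of_forall_prime_dvd_card ht fun q hq hqG => by_contra fun hqt => ?_⟩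
  have := Fact.mk hq
  have hx1 : x = 1 := Subgroup.eq_one_of_coprime_of_mem_sup_sylow hjoin hcore hqG
    (fun Q _ => (hsub _ le_sup_left (hfull q hq Q)).mem_of_coprime_of_mem_sup (hH q hq Q) Q.2) hxH
    (hxt ▸ (Nat.coprime_primes ht hq).mpr (Ne.symm hqt))
  exact ht.one_lt.ne' (hxt ▸ hx1 ▸ orderOf_one)

end IsSPermutable

theorem Subgroup.IsSubnormal.of_isSPermutable {G : Type*} [Group G] [Finite G] {H : Subgroup G}
    (hH : IsSPermutable H) : H.IsSubnormal := by
  induction hn : Nat.card G using Nat.strong_induction_on generalizing G with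
  | _ n ih =>
  subst hn
  have hsub (K : Subgroup G) (hHK : H ≤ K) (hK : K ≠ ⊤) : (H.subgroupOf K).IsSubnormal :=
    ih _ (card_lt_of_ne_top hK) (hH.subgroupOf hHK) rfl
  by_cases hjoin : ∃ N : Subgroup G, N.Normal ∧ N ≠ ⊥ ∧ H ⊔ N ≠ ⊤
  · obtain ⟨N, hN, hN1, hHN⟩ := hjoin
    exact .of_sup_normal (hsub _ le_sup_left hHN) (ih _ (card_quotient_lt hN1)
      ((hH.sup_normal N).map (QuotientGroup.mk'_surjective N)) rfl)
  push Not at hjoin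
  rcases eq_or_ne H ⊤ with rfl | htop
  · exact .top
  have hcore : H.normalCore = ⊥ := by_contra fun h =>
    htop (sup_eq_left.mpr H.normalCore_le ▸ hjoin _ inferInstance h)
  rcases hH.exists_isPGroup_or_eq_bot hsub hjoin hcore with ⟨p, hp, hG⟩ | rfl
  · have := Fact.mk hp
    have := hG.isNilpotent
    exact Group.normalizerCondition_of_isNilpotent.isSubnormal H
  · exact .bot

/-- An s-permutable subgroup of a finite group is subnormal. -/
theorem isSubnormal_of_isSPermutable {G : Type*} [Group G] [Finite G] (H : Subgroup G)
    (h : IsSPermutable H) : IsSubnormal H :=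
  (Subgroup.IsSubnormal.of_isSPermutable h).isSubnormal
end

section
/- Let G be a finite group with subgroups H ≤ K ≤ G. If H is s-permutable in G, then H is s-permutable in K. -/
open Pointwise

/-!
Every Sylow `q`-subgroup of `K` has the form `P ⊓ K` for a Sylow `q`-subgroup `P` of `G`.
Since `H ≤ K`, Dedekind's modular law gives `H (P ∩ K) = HP ∩ K = PH ∩ K = (P ∩ K) H`.
-/

namespace Subgroup

variable {G : Type*} [Group G]

theorem set_mul_inf_comm_of_le {H P K : Subgroup G} (hHK : H ≤ K)
    (h : (H : Set G) * P = P * H) :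
    (H : Set G) * ↑(P ⊓ K) = ↑(P ⊓ K) * H := by
  rw [mul_inf_assoc H P K hHK, inf_comm, inf_mul_assoc K P H hHK, h, Set.inter_comm]

theorem subgroupOf_set_mul_comm {A B K : Subgroup G}
    (h : ((A ⊓ K : Subgroup G) : Set G) * ↑(B ⊓ K) = ↑(B ⊓ K) * ↑(A ⊓ K)) :
    (A.subgroupOf K : Set K) * B.subgroupOf K = B.subgroupOf K * A.subgroupOf K := by
  apply Set.image_injective.mpr K.subtype_injective
  simpa only [Set.image_mul, ← coe_map, subgroupOf_map_subtype] using h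

end Subgroup

theorem isSPermutable_subgroupOf_general {G : Type*} [Group G] (H K : Subgroup G)
    (hHK : H ≤ K) (h : IsSPermutable H) : IsSPermutable (H.subgroupOf K) := by
  intro q hq Q
  obtain ⟨P, hP⟩ := Q.exists_comap_subtype_eq
  rw [← hP, Subgroup.comap_subtype]
  apply Subgroup.subgroupOf_set_mul_comm
  rw [inf_eq_left.mpr hHK]
  exact Subgroup.set_mul_inf_comm_of_le hHK (h q hq P)

/-- If `H ≤ K ≤ G` and `H` is s-permutable in `G`, then `H` is s-permutable in `K`. -/
theorem isSPermutable_subgroupOf {G : Type*} [Group G] [Finite G] (H K : Subgroup G)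
    (hHK : H ≤ K) (h : IsSPermutable H) : IsSPermutable (H.subgroupOf K) :=
  isSPermutable_subgroupOf_general H K hHK h
end

section
/- Let G be a finite group and H a Hall subgroup of G (i.e., the order of H is coprime to its index [G:H]). If H is s-permutable in G, then H is normal in G. -/
/-!
If `H` permutes with a Sylow `p`-subgroup `P`, then `H ⊔ P = HP`, so `[HP : H] = [P : H ∩ P]` is a
power of `p` dividing `[G : H]`. For `p ∣ |H|` the Hall condition makes it `1`, i.e. `P ≤ H`.
Hence `H` contains all Sylow `p`-subgroups for the primes dividing its order, and so does its
normal core; comparing orders, `H` equals its normal core.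
-/

open Pointwise

namespace Subgroup

variable {G : Type*} [Group G] {H K : Subgroup G}

theorem coe_sup_of_coe_mul_comm (hc : (H : Set G) * K = K * H) :
    ((H ⊔ K : Subgroup G) : Set G) = H * K := by
  rw [sup_eq_closure_mul]
  refine Set.Subset.antisymm (fun x hx => ?_) subset_closure
  induction hx using closure_induction with
  | mem _ hx => exact hx
  | one => exact ⟨1, H.one_mem, 1, K.one_mem, mul_one 1⟩
  | mul x y _ _ hx hy =>
    have hmul : (H : Set G) * K * (H * K) = H * K := by
      rw [mul_assoc, ← mul_assoc (K : Set G), ← hc, mul_assoc, ← mul_assoc,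
        coe_mul_coe, coe_mul_coe]
    exact hmul ▸ Set.mul_mem_mul hx hy
  | inv x _ hx =>
    have hinv : ((H : Set G) * K)⁻¹ = H * K := by
      rw [mul_inv_rev, inv_coe_set, inv_coe_set, hc]
    exact hinv ▸ Set.inv_mem_inv.mpr hx

theorem relIndex_sup_left_of_coe_mul_comm (hc : (H : Set G) * K = K * H) :
    H.relIndex (H ⊔ K) = H.relIndex K := by
  refine (Nat.card_eq_of_bijective (quotientSubgroupOfEmbeddingOfLE H le_sup_right)
    ⟨Function.Embedding.injective _, ?_⟩).symm
  rintro ⟨x, hx⟩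
  rw [← SetLike.mem_coe, coe_sup_of_coe_mul_comm hc, hc] at hx
  obtain ⟨k, hk, h, hh, rfl⟩ := hx
  refine ⟨QuotientGroup.mk ⟨k, hk⟩, QuotientGroup.eq.mpr ?_⟩
  simpa [mem_subgroupOf] using hh

theorem le_of_isPGroup_of_coe_mul_comm {p : ℕ} [Fact p.Prime] (hK : IsPGroup p K)
    (hpH : ¬ p ∣ H.index) (hc : (H : Set G) * K = K * H) : K ≤ H := by
  have hdvd : H.relIndex K ∣ H.index :=
    relIndex_sup_left_of_coe_mul_comm hc ▸ relIndex_dvd_index_of_le le_sup_left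
  have hindex : H.index ≠ 0 := by
    rintro h0
    exact hpH (h0 ▸ dvd_zero p)
  have : (H.subgroupOf K).FiniteIndex := ⟨ne_zero_of_dvd_ne_zero hindex hdvd⟩
  obtain ⟨n, hn⟩ := hK.index (H.subgroupOf K)
  have hn0 : n = 0 := by
    by_contra h0
    exact hpH (dvd_trans (dvd_pow_self p h0) (hn ▸ hdvd))
  exact relIndex_eq_one.mp (by rw [relIndex, hn, hn0, pow_zero])

theorem card_dvd_card_of_forall_sylow_le [Finite G]
    (hK : ∀ p : ℕ, p.Prime → p ∣ Nat.card H → ∀ P : Sylow p G, (P : Subgroup G) ≤ K) :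
    Nat.card H ∣ Nat.card K := by
  refine (Nat.dvd_iff_prime_pow_dvd_dvd _ _).mpr fun p k hp hpk => ?_
  rcases k.eq_zero_or_pos with rfl | hk
  · simp
  have := Fact.mk hp
  let P : Sylow p G := default
  have hpkG : p ^ k ∣ Nat.card G := hpk.trans H.card_subgroup_dvd_card
  exact (P.pow_dvd_card_of_pow_dvd_card hpkG).trans
    (card_dvd_of_le (hK p hp ((dvd_pow_self p hk.ne').trans hpk) P))

theorem normal_of_forall_sylow_le [Finite G]
    (hH : ∀ p : ℕ, p.Prime → p ∣ Nat.card H → ∀ P : Sylow p G, (P : Subgroup G) ≤ H) :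
    H.Normal := by
  have hcore : ∀ p : ℕ, p.Prime → p ∣ Nat.card H → ∀ P : Sylow p G,
      (P : Subgroup G) ≤ H.normalCore := fun p hp hpH P x hx g =>
    hH p hp hpH (MulAut.conj g • P) (smul_mem_pointwise_smul x (MulAut.conj g) P hx)
  have hcard := Nat.le_of_dvd Nat.card_pos (card_dvd_card_of_forall_sylow_le hcore)
  exact eq_of_le_of_card_ge H.normalCore_le hcard ▸ H.normalCore_normal

end Subgroup

/-- An s-permutable Hall subgroup of a finite group is normal. -/
theorem normal_of_isSPermutable_hall {G : Type*} [Group G] [Finite G] (H : Subgroup G)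
    (hHall : Nat.Coprime (Nat.card H) H.index) (h : IsSPermutable H) : H.Normal := by
  refine Subgroup.normal_of_forall_sylow_le fun p hp hpH P => ?_
  have := Fact.mk hp
  have hpIndex : ¬ p ∣ H.index :=
    (Nat.Prime.coprime_iff_not_dvd hp).mp (hHall.coprime_dvd_left hpH)
  exact Subgroup.le_of_isPGroup_of_coe_mul_comm P.isPGroup' hpIndex (h p hp P)
end

section
/- Let G be a finite group and let H and K be subgroups of G. If H and K are both s-permutable in G, then H ∩ K is s-permutable in G. -/
open Pointwise

/-! Fix a Sylow `q`-subgroup `Q` and put `M = HQ ∩ KQ`. As `H` permutes with `Q`, the index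
`[HQ : H] = [Q : Q ∩ H]` is a power of `q`. For a Sylow `p`-subgroup `S` with `p ≠ q`,
Dedekind's law turns `HQ ∩ HS` into the subgroup `(HQ ∩ S)H`, whose index over `H` is a power of
`p` dividing `[HQ : H]`, hence `1`; so every `p`-subgroup of `HQ` lies in `H`. Consequently every
`p`-subgroup of `M` lies in `H ∩ K`, so `[M : H ∩ K]` is a power of `q` and is coprime to
`[M : Q]`. Two subgroups of coprime index in `M` multiply to `M` in either order. -/

namespace Subgroup

variable {G : Type*} [Group G]

theorem card_image_mk_eq_relIndex (X Y : Subgroup G) :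
    Nat.card ((Y : Set G).image (QuotientGroup.mk : G → G ⧸ X)) = X.relIndex Y := by
  have hsmul (y : Y) : y • (QuotientGroup.mk 1 : G ⧸ X) = QuotientGroup.mk (y : G) :=
    (MulAction.Quotient.smul_mk X (y : G) 1).trans (congrArg _ (mul_one _))
  have horbit : MulAction.orbit Y (QuotientGroup.mk 1 : G ⧸ X) =
      (Y : Set G).image (QuotientGroup.mk : G → G ⧸ X) := by
    ext c
    simp [MulAction.mem_orbit_iff, hsmul]
  have hstab : MulAction.stabilizer Y (QuotientGroup.mk 1 : G ⧸ X) = X.subgroupOf Y := by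
    ext y
    simp [hsmul, mem_subgroupOf, QuotientGroup.eq]
  rw [← horbit, Nat.card_coe_set_eq, ← MulAction.index_stabilizer, hstab, relIndex]

theorem card_coe_mul_coe (X Y : Subgroup G) :
    Nat.card ((Y : Set G) * X : Set G) = Nat.card X * X.relIndex Y := by
  rw [card_mul_eq_card_subgroup_mul_card_quotient, card_image_mk_eq_relIndex]

theorem card_mul_relIndex {X L : Subgroup G} (h : X ≤ L) :
    Nat.card X * X.relIndex L = Nat.card L := by
  rw [relIndex, ← card_mul_index (X.subgroupOf L), Nat.card_congr (subgroupOfEquivOfLe h).toEquiv]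

theorem relIndex_map_subtype {L : Subgroup G} (P : Subgroup L) :
    (P.map L.subtype).relIndex L = P.index := by
  rw [relIndex, subgroupOf, comap_map_eq_self_of_injective L.subtype_injective]

variable [Finite G]

theorem relIndex_eq_of_coe_eq_mul {X Y L : Subgroup G} (h : (L : Set G) = Y * X) :
    X.relIndex L = X.relIndex Y := by
  have hXL : X ≤ L := fun x hx => by
    rw [← SetLike.mem_coe, h]
    exact ⟨1, one_mem Y, x, hx, one_mul x⟩
  apply Nat.eq_of_mul_eq_mul_left (Nat.card_pos (α := X))
  rw [card_mul_relIndex hXL, ← card_coe_mul_coe, ← h]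
  rfl

theorem relIndex_sup_left_of_mul_comm {X Y : Subgroup G} (h : (X : Set G) * Y = Y * X) :
    X.relIndex (X ⊔ Y) = X.relIndex Y :=
  relIndex_eq_of_coe_eq_mul ((coe_sup_of_mul_comm h).trans h)

theorem coe_mul_eq_of_coprime_relIndex {X Y L : Subgroup G} (hX : X ≤ L) (hY : Y ≤ L)
    (h : (X.relIndex L).Coprime (Y.relIndex L)) : (X : Set G) * Y = L := by
  have hdvd : Y.relIndex L ∣ Y.relIndex X * X.relIndex L := by
    have := relIndex_inf_mul_relIndex Y X L
    rw [inf_of_le_left hX] at this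
    exact this ▸ relIndex_dvd_of_le_left L inf_le_left
  have hYX : Y.relIndex X = Y.relIndex L :=
    le_antisymm (relIndex_le_of_le_right hX FiniteIndex.index_ne_zero)
      (Nat.le_of_dvd (Nat.pos_of_ne_zero FiniteIndex.index_ne_zero)
        (h.symm.dvd_of_dvd_mul_right hdvd))
  have hsub : (X : Set G) * Y ⊆ L :=
    Set.mul_subset_iff.mpr fun x hx y hy => mul_mem (hX hx) (hY hy)
  refine Set.eq_of_subset_of_ncard_le hsub ?_ (Set.toFinite _)
  rw [← Nat.card_coe_set_eq, ← Nat.card_coe_set_eq, card_coe_mul_coe, hYX, card_mul_relIndex hY]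
  rfl

theorem not_dvd_relIndex_of_forall_isPGroup_le {p : ℕ} [Fact p.Prime] {D L : Subgroup G}
    (h : ∀ P ≤ L, IsPGroup p P → P ≤ D) : ¬ p ∣ D.relIndex L := by
  obtain ⟨P⟩ := (inferInstance : Nonempty (Sylow p L))
  have hPD : (P : Subgroup L).map L.subtype ≤ D := h _ (map_subtype_le _) (P.isPGroup'.map _)
  intro hdvd
  apply P.not_dvd_index
  rw [← relIndex_map_subtype]
  exact hdvd.trans (relIndex_dvd_of_le_left L hPD)

end Subgroup

open Subgroup

theorem IsSPermutable.le_of_le_sup_sylow {G : Type*} [Group G] [Finite G] {H : Subgroup G}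
    (hH : IsSPermutable H) {p q : ℕ} [Fact p.Prime] [Fact q.Prime] (hpq : p ≠ q) (Q : Sylow q G)
    {P : Subgroup G} (hP : IsPGroup p P) (hPQ : P ≤ H ⊔ Q) : P ≤ H := by
  obtain ⟨S, hPS⟩ := hP.exists_le_sylow
  set A := H ⊔ (Q : Subgroup G)
  set T := A ⊓ (S : Subgroup G)
  set L := A ⊓ (H ⊔ S)
  have hHL : H.relIndex L = H.relIndex T := by
    apply relIndex_eq_of_coe_eq_mul
    rw [inf_mul_assoc _ _ _ le_sup_left, coe_inf, coe_sup_of_mul_comm (hH p Fact.out S),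
      hH p Fact.out S]
  have hdvdQ : H.relIndex L ∣ Nat.card Q :=
    calc H.relIndex L ∣ H.relIndex A :=
          Dvd.intro _ (relIndex_mul_relIndex _ _ _ (le_inf le_sup_left le_sup_left) inf_le_left)
      _ = H.relIndex Q := relIndex_sup_left_of_mul_comm (hH q Fact.out Q)
      _ ∣ Nat.card Q := relIndex_dvd_card _ _
  have hdvdT : H.relIndex L ∣ Nat.card T := hHL ▸ relIndex_dvd_card _ _
  have hcop : (Nat.card T).Coprime (Nat.card Q) :=
    IsPGroup.coprime_card_of_ne p q hpq T (Q : Subgroup G) (S.isPGroup'.to_le inf_le_right)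
      Q.isPGroup'
  have hLH : L ≤ H := relIndex_eq_one.mp (Nat.eq_one_of_dvd_coprimes hcop hdvdT hdvdQ)
  exact (le_inf hPQ hPS).trans ((inf_le_inf_left A le_sup_right).trans hLH)

/-- The intersection of two s-permutable subgroups of a finite group is s-permutable. -/
theorem isSPermutable_inf {G : Type*} [Group G] [Finite G] (H K : Subgroup G)
    (hH : IsSPermutable H) (hK : IsSPermutable K) : IsSPermutable (H ⊓ K) := by
  intro q hq Q
  have := Fact.mk hq
  set M := (H ⊔ (Q : Subgroup G)) ⊓ (K ⊔ Q)
  have hDM : H ⊓ K ≤ M := inf_le_inf le_sup_left le_sup_left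
  have hQM : (Q : Subgroup G) ≤ M := le_inf le_sup_right le_sup_right
  have hcop : ((H ⊓ K).relIndex M).Coprime ((Q : Subgroup G).relIndex M) := by
    refine Nat.coprime_of_dvd fun p hp hpD hpQ => ?_
    have := Fact.mk hp
    obtain rfl | hpq := eq_or_ne p q
    · exact Q.not_dvd_index (hpQ.trans (relIndex_dvd_index_of_le hQM))
    · refine not_dvd_relIndex_of_forall_isPGroup_le (fun P hPM hP => ?_) hpD
      exact le_inf (hH.le_of_le_sup_sylow hpq Q hP (hPM.trans inf_le_left))
        (hK.le_of_le_sup_sylow hpq Q hP (hPM.trans inf_le_right))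
  rw [coe_mul_eq_of_coprime_relIndex hDM hQM hcop,
    coe_mul_eq_of_coprime_relIndex hQM hDM hcop.symm]
end

section
/- Let G be a finite group, N a normal subgroup of G, and H a p-subgroup of G for some prime p dividing |G|. If H is s-semipermutable in G, then HN/N is s-semipermutable in G/N. -/
open Pointwise

/-- A subgroup `H` of `G` is s-semipermutable in `G` if `H` permutes with every Sylow
`q`-subgroup of `G` for all primes `q` coprime to `|H|`. -/
def IsSSemipermutable {G : Type*} [Group G] (H : Subgroup G) : Prop :=
  ∀ q : ℕ, q.Prime → Nat.Coprime q (Nat.card H) → ∀ Q : Sylow q G,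
    (H : Set G) * ((Q : Subgroup G) : Set G) = ((Q : Subgroup G) : Set G) * (H : Set G)

/-! Sylow subgroups of a quotient lift to Sylow subgroups, and the image of a product of
sets is the product of the images; the only other point is that for a `p`-subgroup the
primes coprime to its order are the primes `q ≠ p`, unless it is trivial. -/

theorem Subgroup.map_mul_sylow_comm_of_surjective {G G' : Type*} [Group G] [Finite G]
    [Group G'] {f : G →* G'} (hf : Function.Surjective f) {q : ℕ} [Fact q.Prime]
    {H : Subgroup G}
    (hH : ∀ P : Sylow q G, (H : Set G) * ((P : Subgroup G) : Set G) = (P : Subgroup G) * H)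
    (Q : Sylow q G') :
    (H.map f : Set G') * ((Q : Subgroup G') : Set G') = (Q : Subgroup G') * H.map f := by
  obtain ⟨P, rfl⟩ := Sylow.mapSurjective_surjective hf q Q
  rw [Sylow.coe_mapSurjective, Subgroup.coe_map, Subgroup.coe_map, ← Set.image_mul,
    ← Set.image_mul, hH P]

theorem IsPGroup.card_eq_one_of_coprime {p : ℕ} [Fact p.Prime] {G : Type*} [Group G]
    (hG : IsPGroup p G) (hcop : Nat.Coprime p (Nat.card G)) : Nat.card G = 1 :=
  hG.card_eq_or_dvd.resolve_right fun hdvd ↦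
    (Fact.out : p.Prime).one_lt.ne' (hcop.eq_one_of_dvd hdvd)

theorem IsPGroup.isSSemipermutable_iff {p : ℕ} [Fact p.Prime] {G : Type*} [Group G]
    [Finite G] {H : Subgroup G} (hH : IsPGroup p H) :
    IsSSemipermutable H ↔ ∀ q : ℕ, q.Prime → q ≠ p → ∀ Q : Sylow q G,
      (H : Set G) * ((Q : Subgroup G) : Set G) = ((Q : Subgroup G) : Set G) * (H : Set G) := by
  refine ⟨fun h q hq hqp ↦ h q hq ?_, fun h q hq hcop Q ↦ ?_⟩
  · obtain ⟨k, hk⟩ := hH.exists_card_eq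
    exact hk ▸ ((Nat.coprime_primes hq Fact.out).mpr hqp).pow_right k
  obtain rfl | hqp := eq_or_ne q p
  · rw [Subgroup.card_eq_one.mp (hH.card_eq_one_of_coprime hcop)]
    simp
  · exact h q hq hqp Q

theorem isSSemipermutable_map_quotient_general {G : Type*} [Group G] [Finite G]
    (N : Subgroup G) [N.Normal] {p : ℕ} (hp : p.Prime)
    (H : Subgroup G) (hH : IsPGroup p H) (h : IsSSemipermutable H) :
    IsSSemipermutable (H.map (QuotientGroup.mk' N)) := by
  have := Fact.mk hp
  rw [hH.isSSemipermutable_iff] at h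
  rw [(hH.map _).isSSemipermutable_iff]
  intro q hq hqp Q
  have := Fact.mk hq
  exact Subgroup.map_mul_sylow_comm_of_surjective (QuotientGroup.mk'_surjective N) (h q hq hqp) Q

/-- If `H` is an s-semipermutable `p`-subgroup of `G` and `N ⊴ G`, then `HN/N` is
s-semipermutable in `G/N`. -/
theorem isSSemipermutable_map_quotient {G : Type*} [Group G] [Finite G]
    (N : Subgroup G) [N.Normal] {p : ℕ} (hp : p.Prime) (hpG : p ∣ Nat.card G)
    (H : Subgroup G) (hH : IsPGroup p H) (h : IsSSemipermutable H) :
    IsSSemipermutable (H.map (QuotientGroup.mk' N)) :=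
  isSSemipermutable_map_quotient_general N hp H hH h
end

section
/- Let G be a finite group and H a subgroup with H ≤ O_p(G) for some prime p, where O_p(G) is the largest normal p-subgroup of G. If H is s-semipermutable in G, then H is s-permutable in G. -/
/-!
Since `O_p(G)` lies in every Sylow `p`-subgroup, `H` is contained in (hence permutes with)
each Sylow `p`-subgroup. Being a `p`-group, `H` has order coprime to every prime `q ≠ p`,
so s-semipermutability already gives permutability with the Sylow `q`-subgroups.
-/

open Pointwise

/-- `O_p(G)`: the largest normal `p`-subgroup of `G`, realized as the supremum of all
normal `p`-subgroups of `G`. -/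
def pCore (p : ℕ) (G : Type*) [Group G] : Subgroup G :=
  sSup {N : Subgroup G | N.Normal ∧ IsPGroup p N}

lemma pCore_le_sylow {G : Type*} [Group G] {p : ℕ} [Fact p.Prime] (P : Sylow p G) :
    pCore p G ≤ P :=
  sSup_le fun _ ⟨_, hN⟩ ↦ hN.le_sylow_of_normal P

lemma Subgroup.coe_mul_comm_of_le {G : Type*} [Group G] {H K : Subgroup G} (hHK : H ≤ K) :
    (H : Set G) * K = K * H :=
  Subgroup.set_mul_normalizer_comm _ _ fun _ hx ↦ K.le_normalizer (hHK hx)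

lemma IsPGroup.coprime_card_of_prime_ne {G : Type*} [Group G] {p q : ℕ} [Fact p.Prime]
    {H : Subgroup G} [Finite H] (hH : IsPGroup p H) (hq : q.Prime) (hqp : q ≠ p) :
    q.Coprime (Nat.card H) := by
  obtain ⟨n, hn⟩ := hH.exists_card_eq
  rw [hn]
  exact ((Nat.coprime_primes hq Fact.out).mpr hqp).pow_right n

/-- If `H ≤ O_p(G)` and `H` is s-semipermutable in `G`, then `H` is s-permutable
in `G`. -/
theorem isSPermutable_of_isSSemipermutable_le_pCore {G : Type*} [Group G] [Finite G]
    {p : ℕ} (hp : p.Prime) (H : Subgroup G) (hle : H ≤ pCore p G)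
    (h : IsSSemipermutable H) : IsSPermutable H := by
  have := Fact.mk hp
  have hle_sylow (P : Sylow p G) : H ≤ P := hle.trans (pCore_le_sylow P)
  intro q hq Q
  rcases eq_or_ne q p with rfl | hqp
  · exact Subgroup.coe_mul_comm_of_le (hle_sylow Q)
  · obtain ⟨P⟩ := (inferInstance : Nonempty (Sylow p G))
    have hH : IsPGroup p H := P.isPGroup'.to_le (hle_sylow P)
    exact h q hq (hH.coprime_card_of_prime_ne hq hqp) Q
end

section
/- Let G be a finite group, H a p-subgroup of G for some prime p dividing |G|, and N a normal subgroup of G. If H is s-semipermutable in G, then H ∩ N is s-semipermutable in G. -/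
/-!
For `q = p`, the `p`-group `H ⊓ N` has order coprime to `p`, so it is trivial. For `q ≠ p`, let
`Q` be a Sylow `q`-subgroup and `M = N ⊔ Q`. The image of `H ⊓ M` in `G ⧸ N` lies in both the
`p`-group `HN/N` and the `q`-group `MN/N = QN/N`, hence is trivial, so `H ⊓ N = H ⊓ M`. Since
`Q ≤ M`, Dedekind's modular law turns `HQ = QH` into `(H ⊓ M)Q = M ∩ HQ = M ∩ QH = Q(H ⊓ M)`.
-/

open Pointwise

namespace IsPGroup

variable {G : Type*} [Group G] {p q : ℕ}

theorem coprime_card_of_coprime [Finite G] (hG : IsPGroup p G) (hqp : q.Coprime p) :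
    q.Coprime (Nat.card G) := by
  obtain ⟨n, hn⟩ := isPGroup_iff_card_dvd_pow.mp hG
  exact (hqp.pow_right n).coprime_dvd_right hn

theorem eq_bot_of_coprime_card [Fact p.Prime] {H : Subgroup G} (hH : IsPGroup p H)
    (hcop : p.Coprime (Nat.card H)) : H = ⊥ := by
  refine Subgroup.eq_bot_of_card_eq H (hH.card_eq_or_dvd.resolve_right fun hdvd => ?_)
  exact (Fact.out : p.Prime).one_lt.ne' (hcop.eq_one_of_dvd hdvd)

theorem inf_sup_le_of_coprime {H K : Subgroup G} (hH : IsPGroup p H) (hK : IsPGroup q K)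
    (hpq : p.Coprime q) (N : Subgroup G) [N.Normal] : H ⊓ (N ⊔ K) ≤ N := by
  have hdisj : Disjoint (H.map (QuotientGroup.mk' N)) (K.map (QuotientGroup.mk' N)) :=
    disjoint_of_coprime (hH.map _) (hK.map _) hpq
  have hmap_sup : (N ⊔ K).map (QuotientGroup.mk' N) = K.map (QuotientGroup.mk' N) := by
    rw [Subgroup.map_sup, QuotientGroup.map_mk'_self, bot_sup_eq]
  have hbot : (H ⊓ (N ⊔ K)).map (QuotientGroup.mk' N) ≤ ⊥ :=
    hdisj (Subgroup.map_mono inf_le_left) (hmap_sup ▸ Subgroup.map_mono inf_le_right)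
  rwa [le_bot_iff, Subgroup.map_eq_bot_iff, QuotientGroup.ker_mk'] at hbot

end IsPGroup

theorem Subgroup.inf_mul_comm_of_mul_comm {G : Type*} [Group G] {H K M : Subgroup G}
    (hKM : K ≤ M) (hHK : (H : Set G) * K = K * H) :
    ((H ⊓ M : Subgroup G) : Set G) * K = K * (H ⊓ M : Subgroup G) := by
  rw [mul_inf_assoc K H M hKM, ← hHK, Set.inter_comm, ← inf_mul_assoc M H K hKM, inf_comm]

theorem isSSemipermutable_inf_normal_general {G : Type*} [Group G] [Finite G] {p : ℕ}
    (hp : p.Prime) (H : Subgroup G) (hH : IsPGroup p H)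
    (N : Subgroup G) [N.Normal] (h : IsSSemipermutable H) :
    IsSSemipermutable (H ⊓ N) := by
  intro q hq hcop Q
  have : Fact p.Prime := ⟨hp⟩
  obtain rfl | hqp := eq_or_ne q p
  · simp [hH.to_inf_left.eq_bot_of_coprime_card hcop]
  have hpq : p.Coprime q := (Nat.coprime_primes hp hq).mpr hqp.symm
  have hHQ := h q hq (hH.coprime_card_of_coprime hpq.symm) Q
  have hHN : H ⊓ N = H ⊓ (N ⊔ Q) :=
    le_antisymm (inf_le_inf_left H le_sup_left)
      (le_inf inf_le_left (hH.inf_sup_le_of_coprime Q.isPGroup' hpq N))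
  rw [hHN]
  exact Subgroup.inf_mul_comm_of_mul_comm le_sup_right hHQ

/-- If `H` is an s-semipermutable `p`-subgroup of `G` and `N ⊴ G`, then `H ∩ N` is
s-semipermutable in `G`. -/
theorem isSSemipermutable_inf_normal {G : Type*} [Group G] [Finite G] {p : ℕ}
    (hp : p.Prime) (hpG : p ∣ Nat.card G) (H : Subgroup G) (hH : IsPGroup p H)
    (N : Subgroup G) [N.Normal] (h : IsSSemipermutable H) :
    IsSSemipermutable (H ⊓ N) :=
  isSSemipermutable_inf_normal_general hp H hH N h
end

section
/- Let G be a finite group, N an abelian normal subgroup of G, and M a subgroup with N ≤ M ≤ G such that gcd(|N|, [G:M]) = 1. If N has a complement in M, then N has a complement in G. -/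
/-!
If `L` complements `N` in `M`, the projection `π : M → N`, `n * l ↦ n`, is a crossed homomorphism
for the conjugation action of `M` on `N` and is the identity on `N`. Its transfer
`δ g = ∏_q q̄ π(q̄⁻¹ g (g⁻¹ q)‾) q̄⁻¹`, over a transversal `q ↦ q̄` of `M` in `G` (the corestriction of
group cohomology), is a crossed homomorphism on `G` which restricts to `n ↦ n ^ [G : M]` on `N`.
As `[G : M]` is prime to `|N|`, this power map is bijective on `N`, which makes the kernel of `δ`
a complement of `N` in `G`.
-/

open scoped IsMulCommutative

namespace Subgroup

variable {G : Type*} [Group G]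

section LeftFactor

variable {N L : Subgroup G}

open Classical in
/-- The `N`-factor of `g = n * l` with `l ∈ L`; junk value `1` when `g ∉ N * L`. -/
noncomputable def leftFactor (N L : Subgroup G) (g : G) : N :=
  if h : ∃ n : N, ∃ l ∈ L, (n : G) * l = g then h.choose else 1

theorem leftFactor_mul (hNL : N ⊓ L = ⊥) (n : N) {l : G} (hl : l ∈ L) :
    leftFactor N L (n * l) = n := by
  have hex : ∃ n' : N, ∃ l' ∈ L, (n' : G) * l' = n * l := ⟨n, l, hl, rfl⟩
  obtain ⟨l', hl', heq⟩ := hex.choose_spec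
  rw [leftFactor, dif_pos hex]
  exact congrArg Prod.fst <| mul_injective_of_disjoint (disjoint_iff.mpr hNL)
    (a₁ := (hex.choose, ⟨l', hl'⟩)) (a₂ := (n, ⟨l, hl⟩)) heq

theorem leftFactor_coe (hNL : N ⊓ L = ⊥) (n : N) : leftFactor N L n = n := by
  simpa using leftFactor_mul hNL n L.one_mem

end LeftFactor

variable {N : Subgroup G} [N.Normal]

theorem conjNormal_apply_eq_self [IsMulCommutative N] {g : G} (hg : g ∈ N) (n : N) :
    MulAut.conjNormal g n = n := by
  ext
  rw [MulAut.conjNormal_apply, mul_inv_eq_iff_eq_mul]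
  exact congrArg Subtype.val (mul_comm (⟨g, hg⟩ : N) n)

def IsCrossedHomOn (M : Subgroup G) (δ : G → N) : Prop :=
  ∀ g ∈ M, ∀ h ∈ M, δ (g * h) = δ g * MulAut.conjNormal g (δ h)

namespace IsCrossedHomOn

variable {M : Subgroup G} {δ : G → N}

theorem map_one (hδ : IsCrossedHomOn M δ) : δ 1 = 1 := by
  have h := hδ 1 M.one_mem 1 M.one_mem
  rwa [one_mul, _root_.map_one, MulAut.one_apply, left_eq_mul] at h

def ker (hδ : IsCrossedHomOn ⊤ δ) : Subgroup G where
  carrier := {g | δ g = 1}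
  one_mem' := hδ.map_one
  mul_mem' {g h} (hg : δ g = 1) (hh : δ h = 1) := by
    show δ (g * h) = 1
    rw [hδ g trivial h trivial, hg, hh, _root_.map_one, one_mul]
  inv_mem' {g} (hg : δ g = 1) := by
    have h := hδ g trivial g⁻¹ trivial
    rwa [mul_inv_cancel, hδ.map_one, hg, one_mul, eq_comm,
      map_eq_one_iff _ (MulAut.conjNormal g).injective] at h

theorem mem_ker (hδ : IsCrossedHomOn ⊤ δ) {g : G} : g ∈ hδ.ker ↔ δ g = 1 := Iff.rfl

theorem map_mul_of_mem_left [IsMulCommutative N] (hδ : IsCrossedHomOn ⊤ δ) {n : G} (hn : n ∈ N)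
    (g : G) : δ (n * g) = δ n * δ g := by
  rw [hδ n trivial g trivial, conjNormal_apply_eq_self hn]

variable {k : ℕ}

theorem inf_ker_eq_bot (hδ : IsCrossedHomOn ⊤ δ) (hk : (Nat.card N).Coprime k)
    (hδN : ∀ n : N, δ n = n ^ k) : N ⊓ hδ.ker = ⊥ := by
  refine eq_bot_iff.mpr fun g ⟨hgN, hgK⟩ => mem_bot.mpr ?_
  have h : (⟨g, hgN⟩ : N) ^ k = 1 ^ k := by rw [← hδN, one_pow]; exact hgK
  exact congrArg Subtype.val (hk.pow_left_bijective.injective h)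

theorem sup_ker_eq_top [IsMulCommutative N] (hδ : IsCrossedHomOn ⊤ δ)
    (hk : (Nat.card N).Coprime k) (hδN : ∀ n : N, δ n = n ^ k) : N ⊔ hδ.ker = ⊤ := by
  refine eq_top_iff.mpr fun g _ => ?_
  obtain ⟨n, hn : n ^ k = δ g⟩ := hk.pow_left_bijective.surjective (δ g)
  have hker : (n⁻¹ : G) * g ∈ hδ.ker := by
    rw [mem_ker, hδ.map_mul_of_mem_left (N.inv_mem n.2), ← coe_inv, hδN, inv_pow, hn,
      inv_mul_cancel]
  simpa using mul_mem_sup n.2 hker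

end IsCrossedHomOn

theorem isCrossedHomOn_leftFactor [IsMulCommutative N] {L : Subgroup G} (hNL : N ⊓ L = ⊥) :
    IsCrossedHomOn (N ⊔ L) (leftFactor N L) := by
  intro g hg h hh
  obtain ⟨n₁, hn₁, l₁, hl₁, rfl⟩ := mem_sup_of_normal_left.mp hg
  obtain ⟨n₂, hn₂, l₂, hl₂, rfl⟩ := mem_sup_of_normal_left.mp hh
  lift n₁ to N using hn₁
  lift n₂ to N using hn₂
  have hprod : n₁ * l₁ * (n₂ * l₂) = ↑(n₁ * MulAut.conjNormal l₁ n₂) * (l₁ * l₂) := by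
    rw [coe_mul, MulAut.conjNormal_apply]; group
  rw [hprod, leftFactor_mul hNL _ (L.mul_mem hl₁ hl₂), leftFactor_mul hNL _ hl₁,
    leftFactor_mul hNL _ hl₂, _root_.map_mul, MulAut.mul_apply, conjNormal_apply_eq_self n₁.2]

theorem out_inv_mul_mul_out_smul_mem (M : Subgroup G) (g : G) (q : G ⧸ M) :
    q.out⁻¹ * g * (g⁻¹ • q).out ∈ M := by
  have h : (QuotientGroup.mk (g * (g⁻¹ • q).out) : G ⧸ M) = QuotientGroup.mk q.out := by
    rw [← smul_eq_mul, ← MulAction.Quotient.smul_mk, QuotientGroup.out_eq', smul_inv_smul,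
      QuotientGroup.out_eq']
  simpa [mul_assoc] using QuotientGroup.eq.mp h.symm

variable [IsMulCommutative N] (M : Subgroup G) [Fintype (G ⧸ M)]

noncomputable def crossedTransfer (π : G → N) (g : G) : N :=
  ∏ q : G ⧸ M, MulAut.conjNormal q.out (π (q.out⁻¹ * g * (g⁻¹ • q).out))

variable {M} {π : G → N}

theorem IsCrossedHomOn.crossedTransfer (hπ : IsCrossedHomOn M π) :
    IsCrossedHomOn ⊤ (crossedTransfer M π) := by
  intro g _ h _
  have hfactor (q : G ⧸ M) :
      MulAut.conjNormal q.out (π (q.out⁻¹ * (g * h) * ((g * h)⁻¹ • q).out)) =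
        MulAut.conjNormal q.out (π (q.out⁻¹ * g * (g⁻¹ • q).out)) *
          MulAut.conjNormal g (MulAut.conjNormal (g⁻¹ • q).out
            (π ((g⁻¹ • q).out⁻¹ * h * (h⁻¹ • g⁻¹ • q).out))) := by
    have hsplit : q.out⁻¹ * (g * h) * ((g * h)⁻¹ • q).out =
        (q.out⁻¹ * g * (g⁻¹ • q).out) * ((g⁻¹ • q).out⁻¹ * h * (h⁻¹ • g⁻¹ • q).out) := by
      rw [mul_inv_rev, mul_smul]; group
    rw [hsplit, hπ _ (out_inv_mul_mul_out_smul_mem M g q) _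
      (out_inv_mul_mul_out_smul_mem M h _), _root_.map_mul, ← MulAut.mul_apply,
      ← MulAut.mul_apply, ← _root_.map_mul, ← _root_.map_mul]
    congr 3
    group
  simp only [Subgroup.crossedTransfer, hfactor, Finset.prod_mul_distrib, ← map_prod]
  congr 2
  exact Fintype.prod_equiv (MulAction.toPerm g⁻¹) _ _ fun q => rfl

theorem crossedTransfer_coe (hNM : N ≤ M) (hπN : ∀ n : N, π n = n) (n : N) :
    crossedTransfer M π n = n ^ M.index := by
  have hfix (q : G ⧸ M) : (n : G)⁻¹ • q = q := by
    have hn : (n : G)⁻¹ ∈ (MulAction.toPermHom G (G ⧸ M)).ker := by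
      rw [← normalCore_eq_ker]; exact normal_le_normalCore.mpr hNM (N.inv_mem n.2)
    exact congrArg (· q) (MonoidHom.mem_ker.mp hn)
  have hfactor (q : G ⧸ M) : MulAut.conjNormal q.out (π (q.out⁻¹ * n * q.out)) = n := by
    rw [← MulAut.conjNormal_inv_apply, hπN, ← MulAut.mul_apply, mul_inv_cancel, MulAut.one_apply]
  simp only [crossedTransfer, hfix, hfactor, Finset.prod_const, Finset.card_univ, index_eq_card,
    Nat.card_eq_fintype_card]

end Subgroup

/-- If `N` is an abelian normal subgroup of a finite group `G`, `N ≤ M ≤ G` with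
`gcd(|N|, [G:M]) = 1`, and `N` is complemented in `M`, then `N` is complemented
in `G`. -/
theorem complement_of_complement_in_intermediate {G : Type*} [Group G] [Finite G]
    (N M : Subgroup G) [N.Normal] (hab : ∀ x ∈ N, ∀ y ∈ N, x * y = y * x)
    (hNM : N ≤ M) (hcop : Nat.Coprime (Nat.card N) M.index)
    (h : ∃ L : Subgroup G, L ≤ M ∧ N ⊓ L = ⊥ ∧ N ⊔ L = M) :
    ∃ L : Subgroup G, N ⊓ L = ⊥ ∧ N ⊔ L = ⊤ := by
  obtain ⟨L, -, hNL, rfl⟩ := h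
  have : IsMulCommutative N := ⟨⟨fun a b => Subtype.ext (hab a a.2 b b.2)⟩⟩
  let := Fintype.ofFinite (G ⧸ (N ⊔ L))
  have hδ := (Subgroup.isCrossedHomOn_leftFactor hNL).crossedTransfer
  have hδN := Subgroup.crossedTransfer_coe hNM (Subgroup.leftFactor_coe hNL)
  exact ⟨hδ.ker, hδ.inf_ker_eq_bot hcop hδN, hδ.sup_ker_eq_top hcop hδN⟩
end
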